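/- Let N and L be positive integers and let e_0, …, e_{L−1} ∈ ℂ^N be envelopes satisfying ‖e_l‖ = (N·L)^{−1/2} for every l. Then the Enveloped Sinusoid frame vectors a_{l,k,m} form a Parseval frame; that is, for every w ∈ ℂ^N, Σ_{l=0}^{L−1} Σ_{k=0}^{N−1} Σ_{m=0}^{N−1} |⟨w, a_{l,k,m}⟩|² = ‖w‖². -/

import Mathlib

open scoped BigOperators
open Finset

/-- Inner product on ℂ^N: ⟨v, w⟩ = Σ_n v[n]·conj(w[n]). -/
noncomputable def cInner {N : ℕ} (v w : Fin N → ℂ) : ℂ :=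
  ∑ n, v n * (starRingEnd ℂ) (w n)

/-- Norm on ℂ^N: ‖v‖ = ⟨v, v⟩^(1/2) = (Σ_n |v[n]|²)^(1/2). -/
noncomputable def cNorm {N : ℕ} (v : Fin N → ℂ) : ℝ :=
  Real.sqrt (∑ n, ‖v n‖ ^ 2)

/-- Enveloped Sinusoid frame vector:
    a_{e,k,m}[n] = e[(n−m) mod N]·exp(2πi·k·(n−m)/N).
    (Fin subtraction `n - m` is subtraction mod N.) -/
noncomputable def espVec {N : ℕ} (e : Fin N → ℂ) (k m : Fin N) : Fin N → ℂ :=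
  fun n => e (n - m) *
    Complex.exp (2 * Real.pi * Complex.I * ((k : ℕ) : ℂ) *
      (((((n : ℕ) : ℤ) - ((m : ℕ) : ℤ)) : ℤ) : ℂ) / ((N : ℕ) : ℂ))

/-!
A finite family `(a_i)` in `ℂ^N` satisfies `∑ i, |⟨u, a_i⟩|² = c ‖u‖²` for all `u` as soon as its
frame operator `∑ i, a_i a_iᴴ` is `c` times the identity. For the Enveloped Sinusoid family, summing
over the modulation index `k` kills the off-diagonal entries of the frame operator by orthogonality
of the characters `n ↦ exp (2πikn/N)`; summing over the translation index `m` turns each diagonal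
entry into `N ‖e_l‖² = 1/L`, and the sum over `l` gives `1`.
-/

open Complex ComplexConjugate

theorem cNorm_sq {N : ℕ} (v : Fin N → ℂ) : cNorm v ^ 2 = ∑ n, ‖v n‖ ^ 2 :=
  Real.sq_sqrt (sum_nonneg fun _ _ => sq_nonneg _)

theorem sum_norm_sq_cInner_eq_of_sum_mul_conj {N : ℕ} {ι : Type*} [Fintype ι]
    (v : ι → Fin N → ℂ) (c : ℝ)
    (hv : ∀ n n', ∑ i, v i n * conj (v i n') = if n = n' then (c : ℂ) else 0)
    (u : Fin N → ℂ) :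
    ∑ i, ‖cInner u (v i)‖ ^ 2 = c * ∑ n, ‖u n‖ ^ 2 := by
  have hexpand : ∀ i, ((‖cInner u (v i)‖ ^ 2 : ℝ) : ℂ)
      = ∑ n, ∑ n', u n * conj (u n') * (v i n' * conj (v i n)) := by
    intro i
    rw [ofReal_pow, ← mul_conj', cInner, map_sum, sum_mul_sum]
    refine sum_congr rfl fun n _ => sum_congr rfl fun n' _ => ?_
    simp only [map_mul, conj_conj]
    ring
  apply ofReal_injective
  calc ((∑ i, ‖cInner u (v i)‖ ^ 2 : ℝ) : ℂ)
      = ∑ n, ∑ n', u n * conj (u n') * ∑ i, v i n' * conj (v i n) := by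
        simp only [ofReal_sum, hexpand, mul_sum]
        rw [sum_comm]
        exact sum_congr rfl fun n _ => sum_comm
    _ = ∑ n, c * (u n * conj (u n)) := by
        simp only [hv, mul_ite, mul_zero, sum_ite_eq', mem_univ, if_true]
        exact sum_congr rfl fun n _ => mul_comm _ _
    _ = ((c * ∑ n, ‖u n‖ ^ 2 : ℝ) : ℂ) := by
        simp only [mul_conj', ← mul_sum]
        push_cast
        rfl

theorem sum_exp_two_pi_I_mul_sub {N : ℕ} (n n' : Fin N) :
    ∑ k : Fin N, exp (2 * Real.pi * I * ((k : ℕ) : ℂ) *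
        ((((n : ℕ) : ℤ) - ((n' : ℕ) : ℤ) : ℤ) : ℂ) / (N : ℂ))
      = if n = n' then (N : ℂ) else 0 := by
  have hN : N ≠ 0 := n.pos.ne'
  have hζ := isPrimitiveRoot_exp N hN
  set d : ℤ := (n : ℕ) - (n' : ℕ)
  set z := exp (2 * Real.pi * I / N) ^ d with hz
  have hterm : ∀ k : ℕ, exp (2 * Real.pi * I * (k : ℂ) * (d : ℂ) / N) = z ^ k := by
    intro k
    rw [hz, ← zpow_natCast, ← zpow_mul, ← exp_int_mul]
    congr 1
    push_cast
    ring
  rw [Fin.sum_univ_eq_sum_range (fun k : ℕ => exp (2 * Real.pi * I * (k : ℂ) * (d : ℂ) / N)) N]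
  simp only [hterm]
  split_ifs with h
  · simp [hz, d, h]
  · have hz1 : z ≠ 1 := by
      rw [hz, Ne, hζ.zpow_eq_one_iff_dvd]
      intro hdvd
      have := Int.eq_zero_of_abs_lt_dvd hdvd (by rw [abs_lt]; omega)
      exact h (Fin.ext (by omega))
    have hzN : z ^ N = 1 := by
      rw [hz, ← zpow_natCast, ← zpow_mul, mul_comm d, zpow_mul, zpow_natCast, hζ.pow_eq_one,
        one_zpow]
    rw [geom_sum_eq hz1, hzN, sub_self, zero_div]

theorem espVec_mul_conj {N : ℕ} (e : Fin N → ℂ) (k m n n' : Fin N) :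
    espVec e k m n * conj (espVec e k m n') = e (n - m) * conj (e (n' - m)) *
      exp (2 * Real.pi * I * ((k : ℕ) : ℂ) *
        ((((n : ℕ) : ℤ) - ((n' : ℕ) : ℤ) : ℤ) : ℂ) / (N : ℂ)) := by
  rw [espVec, espVec, map_mul, ← exp_conj, mul_mul_mul_comm, ← exp_add]
  congr 2
  simp only [map_div₀, map_mul, conj_I, conj_ofReal, map_intCast, map_natCast, map_ofNat]
  push_cast
  ring

theorem sum_espVec_mul_conj {N : ℕ} (e : Fin N → ℂ) (n n' : Fin N) :
    ∑ k, ∑ m, espVec e k m n * conj (espVec e k m n')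
      = if n = n' then ((N * cNorm e ^ 2 : ℝ) : ℂ) else 0 := by
  simp only [espVec_mul_conj]
  rw [sum_comm]
  simp only [← mul_sum, sum_exp_two_pi_I_mul_sub, mul_ite, mul_zero, sum_ite_irrel, sum_const_zero]
  split_ifs with h
  · subst h
    have : NeZero N := NeZero.of_pos n.pos
    rw [← sum_mul, mul_comm, cNorm_sq, ofReal_mul, ofReal_natCast, ofReal_sum]
    congr 1
    refine Fintype.sum_equiv (Equiv.subLeft n) _ _ fun m => ?_
    simp [mul_conj']
  · rfl

theorem esp_parseval_frame_general (N L : ℕ) (hL : 0 < L)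
    (e : Fin L → Fin N → ℂ)
    (he : ∀ l, cNorm (e l) = 1 / Real.sqrt ((N : ℝ) * (L : ℝ)))
    (w : Fin N → ℂ) :
    ∑ l : Fin L, ∑ k : Fin N, ∑ m : Fin N,
        ‖cInner w (espVec (e l) k m)‖ ^ 2 = cNorm w ^ 2 := by
  have hframe : ∀ n n' : Fin N,
      ∑ x : Fin L × Fin N × Fin N,
          espVec (e x.1) x.2.1 x.2.2 n * conj (espVec (e x.1) x.2.1 x.2.2 n')
        = if n = n' then ((1 : ℝ) : ℂ) else 0 := by
    intro n n'
    have hN : (N : ℝ) ≠ 0 := Nat.cast_ne_zero.mpr n.pos.ne'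
    have hL' : (L : ℂ) ≠ 0 := Nat.cast_ne_zero.mpr hL.ne'
    have hnorm : ∀ l, (N : ℝ) * cNorm (e l) ^ 2 = 1 / L := fun l => by
      rw [he, div_pow, Real.sq_sqrt (by positivity)]
      field_simp
    simp only [Fintype.sum_prod_type, sum_espVec_mul_conj, hnorm]
    split_ifs
    · simp [hL']
    · simp
  simpa [Fintype.sum_prod_type, cNorm_sq] using
    sum_norm_sq_cInner_eq_of_sum_mul_conj _ 1 hframe w

/-- If every envelope has norm (N·L)^(−1/2), the Enveloped Sinusoid frame
    vectors form a Parseval frame. -/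
theorem esp_parseval_frame (N L : ℕ) (hN : 0 < N) (hL : 0 < L)
    (e : Fin L → Fin N → ℂ)
    (he : ∀ l, cNorm (e l) = 1 / Real.sqrt ((N : ℝ) * (L : ℝ)))
    (w : Fin N → ℂ) :
    ∑ l : Fin L, ∑ k : Fin N, ∑ m : Fin N,
        ‖cInner w (espVec (e l) k m)‖ ^ 2 = cNorm w ^ 2 :=
  esp_parseval_frame_general N L hL e he w
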